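/- arXiv:1611.09390 — 2 statements merged into one kernel-verified Lean document; each statement's English description precedes it below -/
import Mathlib

section
/- Let X be a uniformly convex Banach space having the Opial property, and let C ⊆ X be a closed convex set (not necessarily bounded). Suppose T : C → C is α-nonexpansive for some multi-index α = (α₁, …, α_{n₀}) (with α₁ > 0, α_{n₀} > 0, α_j ≥ 0 for all j, and α₁ + ⋯ + α_{n₀} = 1), the fixed point set F(T) is nonempty, and T is asymptotically regular at some x ∈ C. Then the sequence of iterates (Tⁿx)ₙ converges weakly to some fixed point y₀ of T. -/
/-!
For every fixed point `z`, the distance `‖Tⁿx - z‖` converges: mean nonexpansiveness prevents it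
from increasing throughout any window of `n₀` consecutive steps, and by asymptotic regularity it
changes little from one step to the next. In particular the orbit is bounded. A uniformly convex
Banach space is reflexive (Milman–Pettis, via Helly's lemma and the smallness of slices of the
ball), so every subsequence of the orbit has a weakly convergent subsequence. Its limit lies in `C`,
and it is a fixed point by the demiclosedness principle, which follows from the Opial property and
asymptotic regularity. Finally the Opial property forces any two such weak limits to coincide,
since each is strictly closer to the orbit than the other (Opial's lemma).
-/

open Filter Topology

/-- A sequence `u` converges weakly to `y` in a normed space. -/
def WeakConvSeq {X : Type*} [NormedAddCommGroup X] [NormedSpace ℝ X]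
    (u : ℕ → X) (y : X) : Prop :=
  ∀ f : X →L[ℝ] ℝ, Filter.Tendsto (fun n => f (u n)) Filter.atTop (nhds (f y))

/-- A normed space has the Opial property: whenever a sequence converges weakly
to `u₀`, then `liminf ‖uₙ - u₀‖ < liminf ‖uₙ - v‖` for every `v ≠ u₀`. -/
def OpialSpace (X : Type*) [NormedAddCommGroup X] [NormedSpace ℝ X] : Prop :=
  ∀ (u : ℕ → X) (u₀ : X), WeakConvSeq u u₀ →
    ∀ v : X, v ≠ u₀ →
      Filter.liminf (fun n => ‖u n - u₀‖) Filter.atTop <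
        Filter.liminf (fun n => ‖u n - v‖) Filter.atTop

open Set NormedSpace TopologicalSpace Bornology

section Dual

variable {E : Type*} [NormedAddCommGroup E] [NormedSpace ℝ E]

theorem ContinuousLinearMap.exists_norm_lt_one_lt_apply (f : StrongDual ℝ E) {r : ℝ}
    (hr : r < ‖f‖) : ∃ x : E, ‖x‖ < 1 ∧ r < f x := by
  obtain ⟨x, hx, hrx⟩ := f.exists_lt_apply_of_lt_opNorm hr
  rw [Real.norm_eq_abs] at hrx
  rcases le_total 0 (f x) with h | h
  · exact ⟨x, hx, by rwa [abs_of_nonneg h] at hrx⟩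
  · exact ⟨-x, by rwa [norm_neg], by rwa [map_neg, ← abs_of_nonpos h]⟩

theorem ContinuousLinearMap.norm_le_div_of_apply_le (f : StrongDual ℝ E) {r c : ℝ} (hr : 0 < r)
    (h : ∀ u : E, ‖u‖ ≤ r → f u ≤ c) : ‖f‖ ≤ c / r := by
  by_contra! hlt
  obtain ⟨x, hx, hcx⟩ := f.exists_norm_lt_one_lt_apply hlt
  have hrx := h (r • x) (by rw [norm_smul, Real.norm_of_nonneg hr.le]; nlinarith [norm_nonneg x])
  rw [map_smul, smul_eq_mul] at hrx
  rw [div_lt_iff₀ hr] at hcx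
  linarith

/-- Helly's lemma, the finite-dimensional form of Goldstine's theorem. -/
theorem exists_norm_le_forall_abs_apply_sub_le (L : StrongDual ℝ (StrongDual ℝ E)) (hL : ‖L‖ ≤ 1)
    (s : Finset (StrongDual ℝ E)) {r η : ℝ} (hr : 1 < r) (hη : 0 < η) :
    ∃ u : E, ‖u‖ ≤ r ∧ ∀ g ∈ s, |g u - L g| ≤ η := by
  classical
  let Φ : E →L[ℝ] (s → ℝ) := ContinuousLinearMap.pi fun g => (g : StrongDual ℝ E)
  let c : s → ℝ := fun g => L g
  have hc : c ∈ closure (Φ '' Metric.closedBall 0 r) := by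
    by_contra hc
    obtain ⟨F, t, hFV, htF⟩ := geometric_hahn_banach_closed_point
      ((convex_closedBall (0 : E) r).linear_image Φ.toLinearMap).closure isClosed_closure hc
    let G : StrongDual ℝ E := F.comp Φ
    have hF : ∀ v : s → ℝ, F v = ∑ g, v g * F (fun g' => if g = g' then 1 else 0) := fun v => by
      simpa using LinearMap.pi_apply_eq_sum_univ (F : (s → ℝ) →ₗ[ℝ] ℝ) v
    have hLG : L G = F c := by
      have hG : G = ∑ g : s, F (fun g' => if g = g' then 1 else 0) • (g : StrongDual ℝ E) := by
        ext u
        rw [ContinuousLinearMap.comp_apply, hF]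
        simp [Φ, mul_comm]
      rw [hG, hF c]
      simp [c, mul_comm]
    have hGt : ∀ u : E, ‖u‖ ≤ r → G u ≤ t := fun u hu =>
      (hFV _ (subset_closure ⟨u, mem_closedBall_zero_iff.2 hu, rfl⟩)).le
    have ht : 0 < t := by
      simpa [G] using hFV _ (subset_closure ⟨0, by simp; linarith, rfl⟩)
    have hFc : F c ≤ t / r := calc
      F c = L G := hLG.symm
      _ ≤ ‖L‖ * ‖G‖ := (Real.le_norm_self _).trans (L.le_opNorm G)
      _ ≤ 1 * (t / r) := mul_le_mul hL (G.norm_le_div_of_apply_le (by linarith) hGt)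
          (norm_nonneg _) zero_le_one
      _ = t / r := one_mul _
    linarith [div_lt_self ht hr]
  obtain ⟨_, ⟨u, hu, rfl⟩, hdist⟩ := Metric.mem_closure_iff.1 hc η hη
  refine ⟨u, mem_closedBall_zero_iff.1 hu, fun g hg => ?_⟩
  have := (dist_le_pi_dist c (Φ u) ⟨g, hg⟩).trans hdist.le
  rwa [Real.dist_eq, abs_sub_comm] at this

theorem exists_forall_norm_sub_le_of_lt_apply [UniformConvexSpace E] {ε : ℝ} (hε : 0 < ε) :
    ∃ δ > 0, ∀ f : StrongDual ℝ E, ‖f‖ ≤ 1 → ∀ a b : E, ‖a‖ ≤ 1 + δ → ‖b‖ ≤ 1 + δ →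
      1 - δ < f a → 1 - δ < f b → ‖a - b‖ ≤ ε := by
  obtain ⟨δ₀, hδ₀, H⟩ := exists_forall_closed_ball_dist_add_le_two_sub E (half_pos hε)
  set δ := min (δ₀ / 4) 1
  have hδ0 : 0 < δ := by positivity
  have hδδ₀ : δ ≤ δ₀ / 4 := min_le_left _ _
  have hδ1 : δ ≤ 1 := min_le_right _ _
  refine ⟨δ, hδ0, fun f hf a b ha hb hfa hfb => ?_⟩
  by_contra! hab
  have hc : 0 < 1 + δ := by positivity
  -- rescale `a` and `b` into the unit ball, where uniform convexity applies
  have hsum : ‖a + b‖ ≤ (1 + δ) * (2 - δ₀) := by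
    have key := H (x := (1 + δ)⁻¹ • a) (y := (1 + δ)⁻¹ • b)
      (by rwa [norm_smul, Real.norm_of_nonneg (by positivity), inv_mul_le_iff₀ hc, mul_one])
      (by rwa [norm_smul, Real.norm_of_nonneg (by positivity), inv_mul_le_iff₀ hc, mul_one])
      (by rw [← smul_sub, norm_smul, Real.norm_of_nonneg (by positivity), le_inv_mul_iff₀ hc]
          nlinarith)
    rwa [← smul_add, norm_smul, Real.norm_of_nonneg (by positivity), inv_mul_le_iff₀ hc] at key
  have hfab : f (a + b) ≤ ‖a + b‖ :=
    (Real.le_norm_self _).trans ((f.le_opNorm _).trans (mul_le_of_le_one_left (norm_nonneg _) hf))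
  rw [map_add] at hfab
  nlinarith [mul_nonneg hδ₀.le hδ0.le]

end Dual

theorem exists_forall_tendsto_of_dist_le {ι Y : Type*} [Nonempty ι] [PseudoMetricSpace Y]
    [CompleteSpace Y] {b : ι → ℕ → Y}
    (hb : ∀ (i m k : ℕ) (h h' : ι), i ≤ m → i ≤ k → dist (b h m) (b h' k) ≤ 1 / (i + 1)) :
    ∃ y, ∀ h, Tendsto (b h) atTop (𝓝 y) := by
  obtain ⟨h₀⟩ := ‹Nonempty ι›
  have hcauchy : CauchySeq (b h₀) := Metric.cauchySeq_iff'.2 fun ε hε => by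
    obtain ⟨i, hi⟩ := exists_nat_one_div_lt hε
    exact ⟨i, fun m hm => (hb i m i h₀ h₀ hm le_rfl).trans_lt hi⟩
  obtain ⟨y, hy⟩ := cauchySeq_tendsto_of_complete hcauchy
  refine ⟨y, fun h => tendsto_iff_dist_tendsto_zero.2 <| squeeze_zero (fun _ => dist_nonneg)
    (fun m => (dist_triangle _ (b h₀ m) y).trans (add_le_add_left (hb m m m h h₀ le_rfl le_rfl) _))
    ?_⟩
  simpa using tendsto_one_div_add_atTop_nhds_zero_nat.add (tendsto_iff_dist_tendsto_zero.1 hy)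

section UniformConvex

variable {E : Type*} [NormedAddCommGroup E] [NormedSpace ℝ E] [UniformConvexSpace E]

theorem exists_forall_apply_eq_of_norm_eq_one [CompleteSpace E]
    (L : StrongDual ℝ (StrongDual ℝ E)) (hL : ‖L‖ = 1) : ∃ y : E, ∀ g, g y = L g := by
  classical
  choose δ hδ hslice using fun i : ℕ =>
    exists_forall_norm_sub_le_of_lt_apply (E := E) (Nat.one_div_pos_of_nat (n := i))
  let θ : ℕ → ℝ := fun m =>
    min ((Finset.range (m + 1)).inf' ⟨0, Finset.mem_range.2 m.succ_pos⟩ δ) (1 / (m + 1))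
  have hθ : ∀ m, 0 < θ m := fun m =>
    lt_min ((Finset.lt_inf'_iff _).2 fun i _ => hδ i) Nat.one_div_pos_of_nat
  have hθδ : ∀ i m, i ≤ m → θ m ≤ δ i := fun i m him =>
    (min_le_left _ _).trans (Finset.inf'_le _ (Finset.mem_range.2 (Nat.lt_succ_of_le him)))
  have hθ0 : Tendsto θ atTop (𝓝 0) := squeeze_zero (fun m => (hθ m).le) (fun m => min_le_right _ _)
    tendsto_one_div_add_atTop_nhds_zero_nat
  choose f hf hLf using fun i =>
    L.exists_norm_lt_one_lt_apply (r := 1 - δ i / 2) (by rw [hL]; linarith [hδ i])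
  -- `b h m` sees `h` and `f 0, …, f m` as `L` does, up to `θ m / 2`; hence it lies in the
  -- slices of `f 0, …, f m`, which shrink, and all the sequences `b h` share one limit
  choose b hb hbg using fun (h : StrongDual ℝ E) (m : ℕ) =>
    exists_norm_le_forall_abs_apply_sub_le L hL.le (insert h ((Finset.range (m + 1)).image f))
      (r := 1 + θ m) (η := θ m / 2) (by linarith [hθ m]) (by linarith [hθ m])
  have hmem : ∀ h i m, i ≤ m → ‖b h m‖ ≤ 1 + δ i ∧ 1 - δ i < f i (b h m) := by
    intro h i m him
    have hfi := abs_le.1 <| hbg h m (f i) <| Finset.mem_insert_of_mem <|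
      Finset.mem_image_of_mem f (Finset.mem_range.2 (Nat.lt_succ_of_le him))
    exact ⟨(hb h m).trans (by linarith [hθδ i m him]), by linarith [hθδ i m him, hLf i]⟩
  obtain ⟨y, hy⟩ := exists_forall_tendsto_of_dist_le (b := b) fun i m k h h' him hik => by
    rw [dist_eq_norm]
    exact hslice i (f i) (hf i).le _ _ (hmem h i m him).1 (hmem h' i k hik).1
      (hmem h i m him).2 (hmem h' i k hik).2
  refine ⟨y, fun h => tendsto_nhds_unique ((h.continuous.tendsto y).comp (hy h)) ?_⟩
  refine tendsto_iff_dist_tendsto_zero.2 <| squeeze_zero (fun _ => dist_nonneg) (fun m => ?_)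
    (by simpa using hθ0.div_const 2)
  rw [Real.dist_eq]
  exact hbg h m h (Finset.mem_insert_self _ _)

/-- **Milman–Pettis theorem.** -/
theorem surjective_inclusionInDoubleDual [CompleteSpace E] :
    Function.Surjective (inclusionInDoubleDual ℝ E) := by
  intro L
  rcases eq_or_ne L 0 with rfl | hL
  · exact ⟨0, map_zero _⟩
  have hL' : 0 < ‖L‖ := by positivity
  obtain ⟨y, hy⟩ := exists_forall_apply_eq_of_norm_eq_one (‖L‖⁻¹ • L)
    (by rw [(NormedSpace.toNormSMulClass (𝕜 := ℝ) (E := StrongDual ℝ (StrongDual ℝ E))).norm_smul,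
      norm_inv, Real.norm_of_nonneg hL'.le, inv_mul_cancel₀ hL'.ne'])
  refine ⟨‖L‖ • y, ContinuousLinearMap.ext fun g => ?_⟩
  rw [dual_def, map_smul, hy g]
  simp [hL'.ne']

instance Submodule.uniformConvexSpace (p : Submodule ℝ E) : UniformConvexSpace p :=
  ⟨fun _ hε => by
    obtain ⟨δ, hδ, H⟩ := exists_forall_sphere_dist_add_le_two_sub E hε
    exact ⟨δ, hδ, fun a ha b hb hab => H ha hb hab⟩⟩

end UniformConvex

section Separable

variable {E : Type*} [NormedAddCommGroup E] [NormedSpace ℝ E]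

theorem Submodule.exists_dual_ne_zero_of_notMem {G : Submodule ℝ E} (hG : IsClosed (G : Set E))
    {z : E} (hz : z ∉ G) : ∃ ψ : StrongDual ℝ E, ψ ≠ 0 ∧ ∀ b ∈ G, ψ b = 0 := by
  obtain ⟨ψ, t, hψz, hψG⟩ := geometric_hahn_banach_point_closed G.convex hG hz
  have hψG0 : ∀ b ∈ G, ψ b = 0 := by
    intro b hb
    by_contra hb0
    have := hψG (((t - 1) / ψ b) • b) (G.smul_mem _ hb)
    rw [map_smul, smul_eq_mul, div_mul_cancel₀ _ hb0] at this
    linarith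
  refine ⟨ψ, fun hψ => ?_, hψG0⟩
  have := hψG 0 G.zero_mem
  simp only [hψ, zero_apply] at hψz this
  linarith

theorem separableSpace_of_separableSpace_strongDual [SeparableSpace (StrongDual ℝ E)] :
    SeparableSpace E := by
  obtain ⟨D, hDc, hD⟩ := exists_countable_dense (StrongDual ℝ E)
  have hnorming : ∀ F : StrongDual ℝ E, ∃ x : E, ‖x‖ ≤ 1 ∧ ‖F‖ / 2 ≤ F x := by
    intro F
    rcases eq_or_ne F 0 with rfl | hF
    · exact ⟨0, by simp, by simp⟩
    have hF' : 0 < ‖F‖ := by positivity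
    obtain ⟨x, hx, hFx⟩ := F.exists_norm_lt_one_lt_apply (r := ‖F‖ / 2) (by linarith)
    exact ⟨x, hx.le, hFx.le⟩
  choose ξ hξ hFξ using hnorming
  let G := (Submodule.span ℝ (ξ '' D)).topologicalClosure
  have hGsep : IsSeparable (G : Set E) := by
    rw [Submodule.topologicalClosure_coe]
    exact (hDc.image ξ).isSeparable.span.closure
  -- a nonzero functional vanishing on `G` could not be approximated from `D`
  have hG : ∀ z, z ∈ G := by
    by_contra! ⟨z, hz⟩
    obtain ⟨ψ, hψ, hψG⟩ :=
      Submodule.exists_dual_ne_zero_of_notMem (Submodule.isClosed_topologicalClosure _) hz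
    have hψ' : 0 < ‖ψ‖ := by positivity
    obtain ⟨F, hFD, hFψ⟩ := Metric.mem_closure_iff.1 (hD ψ) (‖ψ‖ / 4) (by positivity)
    rw [dist_eq_norm] at hFψ
    have hFnorm : 3 / 4 * ‖ψ‖ < ‖F‖ := by linarith [norm_sub_norm_le ψ F]
    have hψξ : ψ (ξ F) = 0 := hψG _ <|
      Submodule.le_topologicalClosure _ (Submodule.subset_span ⟨F, hFD, rfl⟩)
    have hFξ' : F (ξ F) ≤ ‖ψ‖ / 4 := calc
      F (ξ F) = (F - ψ) (ξ F) := by simp [hψξ]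
      _ ≤ ‖F - ψ‖ * ‖ξ F‖ := (Real.le_norm_self _).trans ((F - ψ).le_opNorm _)
      _ ≤ ‖ψ‖ / 4 := by
        rw [norm_sub_rev]
        nlinarith [hξ F, norm_nonneg (ξ F), norm_nonneg (ψ - F)]
    linarith [hFξ F]
  exact isSeparable_univ_iff.1 (hGsep.mono fun z _ => hG z)

theorem separableSpace_strongDual_of_surjective [SeparableSpace E]
    (hE : Function.Surjective (inclusionInDoubleDual ℝ E)) : SeparableSpace (StrongDual ℝ E) :=
  haveI := hE.denseRange.separableSpace (inclusionInDoubleDual ℝ E).continuous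
  separableSpace_of_separableSpace_strongDual

theorem WeakConvSeq.comp {u : ℕ → E} {y : E} (hu : WeakConvSeq u y) {φ : ℕ → ℕ}
    (hφ : Tendsto φ atTop atTop) : WeakConvSeq (u ∘ φ) y :=
  fun f => (hu f).comp hφ

theorem Convex.mem_of_weakConvSeq {C : Set E} (hconv : Convex ℝ C) (hclosed : IsClosed C)
    {u : ℕ → E} {y : E} (hu : ∀ n, u n ∈ C) (hy : WeakConvSeq u y) : y ∈ C := by
  by_contra hyC
  obtain ⟨f, t, hfy, hfC⟩ := geometric_hahn_banach_point_closed hconv hclosed hyC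
  linarith [ge_of_tendsto (hy f) (Eventually.of_forall fun n => (hfC _ (hu n)).le)]

/-- Sequential Banach–Alaoglu in the bidual, whose predual `StrongDual ℝ E` is separable. -/
theorem exists_weakConvSeq_comp_of_surjective [SeparableSpace E]
    (hE : Function.Surjective (inclusionInDoubleDual ℝ E)) {w : ℕ → E} (hw : IsBounded (range w)) :
    ∃ (z : E) (φ : ℕ → ℕ), StrictMono φ ∧ WeakConvSeq (w ∘ φ) z := by
  have := separableSpace_strongDual_of_surjective hE
  obtain ⟨R, hR⟩ := isBounded_iff_forall_norm_le.1 hw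
  obtain ⟨L, -, φ, hφ, hL⟩ := WeakDual.isSeqCompact_closedBall ℝ (StrongDual ℝ E) 0 R
    (x := fun k => StrongDual.toWeakDual (inclusionInDoubleDual ℝ E (w k)))
    fun k => mem_closedBall_zero_iff.2 ((double_dual_bound ℝ E _).trans (hR _ ⟨k, rfl⟩))
  obtain ⟨z, hz⟩ := hE (WeakDual.toStrongDual L)
  refine ⟨z, φ, hφ, fun g => ?_⟩
  have hLg : L g = g z := by rw [← dual_def ℝ E z g, hz]; rfl
  exact hLg ▸ ((WeakDual.eval_continuous g).tendsto L).comp hL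

theorem exists_weakConvSeq_comp [CompleteSpace E] [UniformConvexSpace E] {w : ℕ → E}
    (hw : IsBounded (range w)) : ∃ (z : E) (φ : ℕ → ℕ), StrictMono φ ∧ WeakConvSeq (w ∘ φ) z := by
  let Y := (Submodule.span ℝ (range w)).topologicalClosure
  have : CompleteSpace Y := (Submodule.isClosed_topologicalClosure _).completeSpace_coe
  have : SeparableSpace Y := by
    have : IsSeparable (Y : Set E) := by
      rw [Submodule.topologicalClosure_coe]
      exact (countable_range w).isSeparable.span.closure
    exact this.separableSpace
  let wY : ℕ → Y := fun k =>
    ⟨w k, Submodule.le_topologicalClosure _ (Submodule.subset_span ⟨k, rfl⟩)⟩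
  have hwY : IsBounded (range wY) := by
    obtain ⟨R, hR⟩ := isBounded_iff_forall_norm_le.1 hw
    exact isBounded_iff_forall_norm_le.2 ⟨R, by rintro _ ⟨k, rfl⟩; exact hR _ ⟨k, rfl⟩⟩
  obtain ⟨z, φ, hφ, hz⟩ :=
    exists_weakConvSeq_comp_of_surjective surjective_inclusionInDoubleDual hwY
  exact ⟨z, φ, hφ, fun f => hz (f.comp Y.subtypeL)⟩

end Separable

namespace OpialSpace

variable {X : Type*} [NormedAddCommGroup X] [NormedSpace ℝ X]

theorem lt_of_tendsto (hX : OpialSpace X) {v : ℕ → X} {z y : X} (hv : WeakConvSeq v z)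
    (hy : y ≠ z) {B A : ℝ} (hB : Tendsto (fun k => ‖v k - z‖) atTop (𝓝 B))
    (hA : Tendsto (fun k => ‖v k - y‖) atTop (𝓝 A)) : B < A := by
  simpa [hB.liminf_eq, hA.liminf_eq] using hX v z hv y hy

theorem eq_of_weakConvSeq_comp (hX : OpialSpace X) {u : ℕ → X} {z z' : X} {d d' : ℝ}
    (hd : Tendsto (fun n => ‖u n - z‖) atTop (𝓝 d))
    (hd' : Tendsto (fun n => ‖u n - z'‖) atTop (𝓝 d')) {φ φ' : ℕ → ℕ}
    (hφ : Tendsto φ atTop atTop) (hφ' : Tendsto φ' atTop atTop)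
    (hz : WeakConvSeq (u ∘ φ) z) (hz' : WeakConvSeq (u ∘ φ') z') : z = z' := by
  by_contra hne
  have := hX.lt_of_tendsto hz (Ne.symm hne) (hd.comp hφ) (hd'.comp hφ)
  have := hX.lt_of_tendsto hz' hne (hd'.comp hφ') (hd.comp hφ')
  linarith

/-- **Opial's lemma.** -/
theorem exists_weakConvSeq (hX : OpialSpace X) {u : ℕ → X} {F : Set X}
    (hlim : ∀ z ∈ F, ∃ d, Tendsto (fun n => ‖u n - z‖) atTop (𝓝 d))
    (hsub : ∀ ψ : ℕ → ℕ, Tendsto ψ atTop atTop →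
      ∃ z ∈ F, ∃ ρ : ℕ → ℕ, Tendsto ρ atTop atTop ∧ WeakConvSeq (u ∘ ψ ∘ ρ) z) :
    ∃ y ∈ F, WeakConvSeq u y := by
  obtain ⟨y, hyF, ρ, hρ, hy⟩ := hsub id tendsto_id
  obtain ⟨d, hd⟩ := hlim y hyF
  refine ⟨y, hyF, fun f => tendsto_of_subseq_tendsto fun ψ hψ => ?_⟩
  obtain ⟨z, hzF, ρ', hρ', hz⟩ := hsub ψ hψ
  obtain ⟨d', hd'⟩ := hlim z hzF
  obtain rfl := hX.eq_of_weakConvSeq_comp hd' hd (hψ.comp hρ') hρ hz hy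
  exact ⟨ρ', hz f⟩

theorem eq_of_sum_mul_norm_sub_le (hX : OpialSpace X) {v : ℕ → X} {z : X}
    (hv : WeakConvSeq v z) (hbdd : IsBounded (range v)) {ι : Type*} [Fintype ι] {w : ι → ℝ}
    (hw : ∀ i, 0 ≤ w i) (hw1 : ∑ i, w i = 1) {y : ι → X} {e : ℕ → ℝ}
    (he : Tendsto e atTop (𝓝 0)) (h : ∀ k, ∑ i, w i * ‖v k - y i‖ ≤ ‖v k - z‖ + e k)
    {i₀ : ι} (hi₀ : 0 < w i₀) : y i₀ = z := by
  obtain ⟨R, hR⟩ := isBounded_iff_forall_norm_le.1 hbdd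
  let p : ℕ → (ι → ℝ) × ℝ := fun k => (fun i => ‖v k - y i‖, ‖v k - z‖)
  have hp : ∀ k, p k ∈ Metric.closedBall 0 (R + ‖z‖ + ∑ i, ‖y i‖) := by
    intro k
    have hvk := hR _ ⟨k, rfl⟩
    have hy : ∀ i, ‖y i‖ ≤ ∑ i, ‖y i‖ := fun i =>
      Finset.single_le_sum (fun i _ => norm_nonneg (y i)) (Finset.mem_univ i)
    have hy0 : 0 ≤ ∑ i, ‖y i‖ := Finset.sum_nonneg fun i _ => norm_nonneg (y i)
    have h0 : 0 ≤ R + ‖z‖ + ∑ i, ‖y i‖ := by linarith [norm_nonneg (v k), norm_nonneg z]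
    rw [mem_closedBall_zero_iff, norm_prod_le_iff, pi_norm_le_iff_of_nonneg h0]
    refine ⟨fun i => ?_, ?_⟩ <;> rw [norm_norm]
    · linarith [norm_sub_le (v k) (y i), hy i, norm_nonneg z]
    · linarith [norm_sub_le (v k) z]
  obtain ⟨⟨A, B⟩, -, ρ, hρ, hpρ⟩ := tendsto_subseq_of_bounded Metric.isBounded_closedBall hp
  have hA : ∀ i, Tendsto (fun k => ‖v (ρ k) - y i‖) atTop (𝓝 (A i)) := fun i =>
    tendsto_pi_nhds.1 hpρ.fst_nhds i
  have hB : Tendsto (fun k => ‖v (ρ k) - z‖) atTop (𝓝 B) := hpρ.snd_nhds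
  have hvρ := hv.comp hρ.tendsto_atTop
  have hBA : ∀ i, B ≤ A i := fun i => by
    rcases eq_or_ne (y i) z with hyi | hyi
    · exact (tendsto_nhds_unique hB (hyi ▸ hA i)).le
    · exact (hX.lt_of_tendsto hvρ hyi hB (hA i)).le
  have hsum : ∑ i, w i * A i ≤ B :=
    le_of_tendsto_of_tendsto' (tendsto_finsetSum _ fun i _ => (hA i).const_mul (w i))
      (by simpa using hB.add (he.comp hρ.tendsto_atTop)) fun k => h (ρ k)
  by_contra hne
  have : ∑ i, w i * B < ∑ i, w i * A i := Finset.sum_lt_sum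
    (fun i _ => mul_le_mul_of_nonneg_left (hBA i) (hw i))
    ⟨i₀, Finset.mem_univ _, mul_lt_mul_of_pos_left (hX.lt_of_tendsto hvρ hne hB (hA i₀)) hi₀⟩
  rw [← Finset.sum_mul, hw1, one_mul] at this
  linarith

end OpialSpace

theorem Finset.exists_le_of_sum_mul_le {ι : Type*} {s : Finset ι} {w a : ι → ℝ} {b : ℝ}
    (hw : ∀ i ∈ s, 0 ≤ w i) (hw1 : ∑ i ∈ s, w i = 1) (h : ∑ i ∈ s, w i * a i ≤ b) :
    ∃ i ∈ s, a i ≤ b := by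
  by_contra! hlt
  obtain ⟨i, hi, hwi⟩ := Finset.exists_ne_zero_of_sum_ne_zero (hw1 ▸ one_ne_zero)
  have : ∑ i ∈ s, w i * b < ∑ i ∈ s, w i * a i := Finset.sum_lt_sum
    (fun i hi => mul_le_mul_of_nonneg_left (hlt i hi).le (hw i hi))
    ⟨i, hi, mul_lt_mul_of_pos_left (hlt i hi) ((hw i hi).lt_of_ne' hwi)⟩
  rw [← Finset.sum_mul, hw1, one_mul] at this
  linarith

section WindowDecrease

variable {d : ℕ → ℝ} {N : ℕ}

theorem exists_le_of_forall_exists_add_le (hd : ∀ m, ∃ j, 1 ≤ j ∧ j ≤ N ∧ d (m + j) ≤ d m)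
    {m n : ℕ} (hmn : m ≤ n) : ∃ p, m ≤ p ∧ p ≤ n ∧ n < p + N ∧ d p ≤ d m := by
  induction n, hmn using Nat.le_induction with
  | base =>
    obtain ⟨j, hj1, hjN, -⟩ := hd m
    exact ⟨m, le_rfl, le_rfl, by omega, le_rfl⟩
  | succ n hmn ih =>
    obtain ⟨p, hmp, hpn, hnp, hp⟩ := ih
    by_cases hn : n + 1 < p + N
    · exact ⟨p, hmp, by omega, hn, hp⟩
    · obtain ⟨j, hj1, hjN, hj⟩ := hd p
      exact ⟨p + j, by omega, by omega, by omega, hj.trans hp⟩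

theorem le_add_of_forall_exists_add_le (hd : ∀ m, ∃ j, 1 ≤ j ∧ j ≤ N ∧ d (m + j) ≤ d m)
    {m : ℕ} {η : ℝ} (hη : ∀ k ≥ m, dist (d k) (d (k + 1)) ≤ η) {n : ℕ} (hmn : m ≤ n) :
    d n ≤ d m + N * η := by
  obtain ⟨p, hmp, hpn, hnp, hp⟩ := exists_le_of_forall_exists_add_le hd hmn
  have hη0 : 0 ≤ η := dist_nonneg.trans (hη m le_rfl)
  have hpn' := dist_le_Ico_sum_of_dist_le (f := d) hpn (d := fun _ => η)
    fun hk _ => hη _ (hmp.trans hk)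
  rw [Finset.sum_const, Nat.card_Ico, nsmul_eq_mul] at hpn'
  have hN : ((n - p : ℕ) : ℝ) ≤ N := by exact_mod_cast (by omega : n - p ≤ N)
  nlinarith [Real.sub_le_dist (d n) (d p), dist_comm (d n) (d p)]

theorem cauchySeq_of_forall_exists_add_le (hd : ∀ m, ∃ j, 1 ≤ j ∧ j ≤ N ∧ d (m + j) ≤ d m)
    (hbdd : BddBelow (range d))
    (hinc : Tendsto (fun k => dist (d k) (d (k + 1))) atTop (𝓝 0)) : CauchySeq d := by
  refine Metric.cauchySeq_iff'.2 fun ε hε => ?_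
  set η := ε / (2 * (N + 1))
  have hNη : N * η < ε / 2 := by
    rw [mul_div_assoc', div_lt_div_iff₀ (by positivity) two_pos]
    nlinarith
  obtain ⟨K, hK⟩ := eventually_atTop.1 (hinc.eventually (ge_mem_nhds (by positivity : 0 < η)))
  set c := sInf (d '' Ici K)
  have hne : (d '' Ici K).Nonempty := ⟨d K, mem_image_of_mem _ self_mem_Ici⟩
  obtain ⟨_, ⟨m, hm, rfl⟩, hmc⟩ := exists_lt_of_csInf_lt hne (lt_add_of_pos_right c (half_pos hε))
  refine ⟨m, fun n hn => ?_⟩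
  have hup := le_add_of_forall_exists_add_le hd (fun k hk => hK k (le_trans hm hk)) hn
  have hlow : c ≤ d n :=
    csInf_le (hbdd.mono (image_subset_range _ _)) (mem_image_of_mem _ (le_trans hm hn))
  rw [Real.dist_eq, abs_lt]
  constructor <;> linarith

end WindowDecrease

theorem isBounded_range_of_tendsto_norm_sub {E : Type*} [SeminormedAddCommGroup E] {u : ℕ → E}
    {z : E} {d : ℝ} (h : Tendsto (fun n => ‖u n - z‖) atTop (𝓝 d)) : IsBounded (range u) := by
  obtain ⟨R, hR⟩ := h.bddAbove_range
  refine (Metric.isBounded_iff_subset_closedBall z).2 ⟨R, range_subset_iff.2 fun n => ?_⟩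
  rw [Metric.mem_closedBall, dist_eq_norm]
  exact hR ⟨n, rfl⟩

theorem tendsto_norm_sub_add_of_tendsto_norm_sub_succ {E : Type*} [SeminormedAddCommGroup E]
    {u : ℕ → E} (hu : Tendsto (fun n => ‖u n - u (n + 1)‖) atTop (𝓝 0)) (j : ℕ) :
    Tendsto (fun n => ‖u n - u (n + j)‖) atTop (𝓝 0) := by
  induction j with
  | zero => simp
  | succ j ih =>
    refine squeeze_zero (fun _ => norm_nonneg _)
      (fun n => norm_sub_le_norm_sub_add_norm_sub (u n) (u (n + j)) (u (n + j + 1))) ?_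
    simpa using ih.add (hu.comp (tendsto_add_atTop_nat j))

/-- `α j` is the weight of `T^[j + 1]`, i.e. the paper's `α_{j+1}`. -/
def MeanNonexpansiveOn {X : Type*} [NormedAddCommGroup X] {n₀ : ℕ} (α : Fin n₀ → ℝ)
    (T : X → X) (C : Set X) : Prop :=
  ∀ x ∈ C, ∀ y ∈ C, ∑ j : Fin n₀, α j * ‖T^[(j : ℕ) + 1] x - T^[(j : ℕ) + 1] y‖ ≤ ‖x - y‖

namespace MeanNonexpansiveOn

variable {X : Type*} [NormedAddCommGroup X] {n₀ : ℕ} {α : Fin n₀ → ℝ} {T : X → X} {C : Set X}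

theorem exists_norm_iterate_sub_le (hT : MeanNonexpansiveOn α T C) (hα : ∀ j, 0 ≤ α j)
    (hα1 : ∑ j, α j = 1) {y z : X} (hy : y ∈ C) (hz : z ∈ C) (hTz : T z = z) :
    ∃ j : Fin n₀, ‖T^[(j : ℕ) + 1] y - z‖ ≤ ‖y - z‖ := by
  obtain ⟨j, -, hj⟩ := Finset.exists_le_of_sum_mul_le (fun j _ => hα j) hα1
    (by simpa only [Function.iterate_fixed hTz] using hT y hy z hz)
  exact ⟨j, hj⟩

theorem exists_tendsto_norm_iterate_sub (hT : MeanNonexpansiveOn α T C) (hTC : MapsTo T C C)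
    (hα : ∀ j, 0 ≤ α j) (hα1 : ∑ j, α j = 1) {x z : X} (hx : x ∈ C) (hz : z ∈ C) (hTz : T z = z)
    (har : Tendsto (fun n => ‖T^[n] x - T^[n + 1] x‖) atTop (𝓝 0)) :
    ∃ d, Tendsto (fun n => ‖T^[n] x - z‖) atTop (𝓝 d) := by
  refine cauchySeq_tendsto_of_complete (cauchySeq_of_forall_exists_add_le (N := n₀) ?_ ?_ ?_)
  · intro m
    obtain ⟨j, hj⟩ := hT.exists_norm_iterate_sub_le hα hα1 (hTC.iterate m hx) hz hTz
    refine ⟨j + 1, by omega, j.isLt, ?_⟩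
    rwa [add_comm m, Function.iterate_add_apply]
  · exact ⟨0, by rintro _ ⟨n, rfl⟩; exact norm_nonneg _⟩
  · refine squeeze_zero (fun _ => dist_nonneg) (fun n => ?_) har
    simpa [Real.dist_eq] using abs_norm_sub_norm_le (T^[n] x - z) (T^[n + 1] x - z)

theorem sum_mul_norm_sub_iterate_le (hT : MeanNonexpansiveOn α T C) (hα : ∀ j, 0 ≤ α j)
    {v z : X} (hv : v ∈ C) (hz : z ∈ C) :
    ∑ j, α j * ‖v - T^[(j : ℕ) + 1] z‖ ≤ ‖v - z‖ + ∑ j, α j * ‖v - T^[(j : ℕ) + 1] v‖ := by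
  calc ∑ j, α j * ‖v - T^[(j : ℕ) + 1] z‖
      ≤ ∑ j, (α j * ‖v - T^[(j : ℕ) + 1] v‖ +
          α j * ‖T^[(j : ℕ) + 1] v - T^[(j : ℕ) + 1] z‖) :=
        Finset.sum_le_sum fun j _ => by
          rw [← mul_add]
          exact mul_le_mul_of_nonneg_left (norm_sub_le_norm_sub_add_norm_sub _ _ _) (hα j)
    _ ≤ ‖v - z‖ + ∑ j, α j * ‖v - T^[(j : ℕ) + 1] v‖ := by
        rw [Finset.sum_add_distrib]
        linarith [hT v hv z hz]

/-- The demiclosedness principle. -/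
theorem apply_eq_of_weakConvSeq [NormedSpace ℝ X] (hX : OpialSpace X)
    (hT : MeanNonexpansiveOn α T C) (hα : ∀ j, 0 ≤ α j) (hα1 : ∑ j, α j = 1) (hn₀ : 0 < n₀)
    (hα₀ : 0 < α ⟨0, hn₀⟩) {v : ℕ → X} {z : X} (hvC : ∀ k, v k ∈ C) (hz : z ∈ C)
    (hbdd : IsBounded (range v)) (hv : WeakConvSeq v z)
    (hreg : ∀ j, Tendsto (fun k => ‖v k - T^[j] (v k)‖) atTop (𝓝 0)) : T z = z := by
  simpa using hX.eq_of_sum_mul_norm_sub_le hv hbdd hα hα1 (y := fun j => T^[(j : ℕ) + 1] z)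
    (by simpa using tendsto_finsetSum _ fun (j : Fin n₀) _ => (hreg (j + 1)).const_mul (α j))
    (fun k => hT.sum_mul_norm_sub_iterate_le hα (hvC k) hz) hα₀

end MeanNonexpansiveOn

theorem weak_convergence_of_mean_nonexpansive_unbounded
    {X : Type*} [NormedAddCommGroup X] [NormedSpace ℝ X] [CompleteSpace X]
    [UniformConvexSpace X] (hX_opial : OpialSpace X)
    (C : Set X) (hC_closed : IsClosed C) (hC_convex : Convex ℝ C)
    (T : X → X) (hT : Set.MapsTo T C C)
    (n₀ : ℕ) (hn₀ : 0 < n₀) (α : Fin n₀ → ℝ)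
    (hα_nonneg : ∀ j, 0 ≤ α j)
    (hα_first : 0 < α ⟨0, hn₀⟩)
    (hα_sum : ∑ j, α j = 1)
    (hne : ∀ x ∈ C, ∀ y ∈ C,
      ∑ j : Fin n₀, α j * ‖T^[(j : ℕ) + 1] x - T^[(j : ℕ) + 1] y‖ ≤ ‖x - y‖)
    (hF : ∃ z ∈ C, T z = z)
    (x : X) (hx : x ∈ C)
    (har : Filter.Tendsto (fun n => ‖T^[n] x - T^[n + 1] x‖) Filter.atTop (nhds 0)) :
    ∃ y₀ ∈ C, T y₀ = y₀ ∧ WeakConvSeq (fun n => T^[n] x) y₀ := by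
  have hMN : MeanNonexpansiveOn α T C := hne
  have horbit : ∀ n, T^[n] x ∈ C := fun n => hT.iterate n hx
  have hlim : ∀ z ∈ C, T z = z → ∃ d, Tendsto (fun n => ‖T^[n] x - z‖) atTop (𝓝 d) :=
    fun z hz hTz => hMN.exists_tendsto_norm_iterate_sub hT hα_nonneg hα_sum hx hz hTz har
  obtain ⟨z₀, hz₀C, hz₀⟩ := hF
  obtain ⟨d₀, hd₀⟩ := hlim z₀ hz₀C hz₀
  have hbdd := isBounded_range_of_tendsto_norm_sub hd₀
  have hreg : ∀ j, Tendsto (fun n => ‖T^[n] x - T^[j] (T^[n] x)‖) atTop (𝓝 0) := fun j => by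
    simpa only [← Function.iterate_add_apply, add_comm j] using
      tendsto_norm_sub_add_of_tendsto_norm_sub_succ har j
  obtain ⟨y, ⟨hyC, hyT⟩, hy⟩ := hX_opial.exists_weakConvSeq (F := {z | z ∈ C ∧ T z = z})
    (fun z hz => hlim z hz.1 hz.2) fun ψ hψ => by
      obtain ⟨z, φ, hφ, hz⟩ := exists_weakConvSeq_comp (hbdd.subset (range_comp_subset_range ψ _))
      have hzC := hC_convex.mem_of_weakConvSeq hC_closed (fun k => horbit _) hz
      have hbddψφ : IsBounded (range ((fun n => T^[n] x) ∘ ψ ∘ φ)) :=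
        hbdd.subset (range_comp_subset_range _ _)
      refine ⟨z, ⟨hzC, ?_⟩, φ, hφ.tendsto_atTop, hz⟩
      exact hMN.apply_eq_of_weakConvSeq hX_opial hα_nonneg hα_sum hn₀ hα_first (fun k => horbit _)
        hzC hbddψφ hz fun j => (hreg j).comp (hψ.comp hφ.tendsto_atTop)
  exact ⟨y, hyC, hyT, hy⟩
end

section
/- Let ℓ² be the Hilbert space of square-summable real sequences with its usual norm ‖·‖₂, and let B denote its closed unit ball. Define τ : [−1,1] → [−1,1] by τ(t) = √2·t + (√2 − 1) for −1 ≤ t ≤ −(√2 − 1)/√2, τ(t) = 0 for −(√2 − 1)/√2 ≤ t ≤ (√2 − 1)/√2, and τ(t) = √2·t − (√2 − 1) for (√2 − 1)/√2 ≤ t ≤ 1, and define T : B → B by T(x₁, x₂, x₃, x₄, …) = (τ(x₂), √(2/3)·x₃, x₄, x₅, …). Then no iterate of T is nonexpansive: for every j ≥ 1 there exist x, y ∈ B with ‖Tʲx − Tʲy‖₂ > ‖x − y‖₂ (indeed the Lipschitz constant of T is √2 and that of Tʲ is 2/√3 for every j ≥ 2). -/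
open Real

/-- The piecewise map `τ : [-1,1] → [-1,1]` of Goebel and Sims. -/
noncomputable def tau (t : ℝ) : ℝ :=
  if t ≤ -((Real.sqrt 2 - 1) / Real.sqrt 2) then Real.sqrt 2 * t + (Real.sqrt 2 - 1)
  else if t ≤ (Real.sqrt 2 - 1) / Real.sqrt 2 then 0
  else Real.sqrt 2 * t - (Real.sqrt 2 - 1)

/-- The map `T(x₁, x₂, x₃, x₄, …) = (τ(x₂), √(2/3)·x₃, x₄, x₅, …)` on real sequences
(0-indexed: `x j` is the `(j+1)`-st coordinate). -/
noncomputable def Tseq (x : ℕ → ℝ) : ℕ → ℝ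
  | 0 => tau (x 1)
  | 1 => Real.sqrt (2 / 3) * x 2
  | n + 2 => x (n + 3)

/-- Membership in the closed unit ball of `ℓ²`: square-summable with `∑' j, (x j)² ≤ 1`. -/
def InBall (x : ℕ → ℝ) : Prop := Memℓp x 2 ∧ (∑' j, (x j) ^ 2) ≤ 1


/-!
`τ = √2 · σ`, where `σ` is soft thresholding at level `c = (√2 - 1)/√2`; `σ` is monotone with
slopes in `[0, 1]`, so `τ` is `√2`-Lipschitz, with slope exactly `√2` where `|t| > c`.
Coordinate `i` of `Tx - Ty` is at most `√2` times coordinate `i + 1` of `x - y`. For `j ≥ 2` the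
first coordinate of `Tʲx` is `τ(√(2/3) · x_j)`, so coordinate `i` of `Tʲx - Tʲy` is at most
`√2 · √(2/3) = 2/√3` times coordinate `i + j` of `x - y`; discarding the first `j` coordinates of
`x - y` only lowers its norm. Both constants are attained on the pair `e_j`, `e_j / 2`, whose
nonzero coordinates are sent into the region where `τ` has slope `√2`.
-/
noncomputable def softThreshold (c t : ℝ) : ℝ :=
  if t ≤ -c then t + c else if t ≤ c then 0 else t - c

lemma softThreshold_sub_mem_Icc {c s t : ℝ} (hc : 0 ≤ c) (hst : s ≤ t) :
    softThreshold c t - softThreshold c s ∈ Set.Icc 0 (t - s) := by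
  unfold softThreshold
  split_ifs <;> constructor <;> linarith

lemma abs_softThreshold_sub_le {c : ℝ} (hc : 0 ≤ c) (s t : ℝ) :
    |softThreshold c s - softThreshold c t| ≤ |s - t| := by
  wlog hst : s ≤ t generalizing s t
  · rw [abs_sub_comm, abs_sub_comm s]
    exact this t s (le_of_not_ge hst)
  obtain ⟨h0, h1⟩ := softThreshold_sub_mem_Icc hc hst
  rw [abs_sub_comm, abs_of_nonneg h0, abs_sub_comm, abs_of_nonneg (sub_nonneg.2 hst)]
  exact h1

lemma tau_eq_mul_softThreshold (t : ℝ) :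
    tau t = √2 * softThreshold ((√2 - 1) / √2) t := by
  have h : √2 * ((√2 - 1) / √2) = √2 - 1 := by field_simp
  unfold tau softThreshold
  split_ifs <;> simp only [mul_add, mul_sub, mul_zero, h]

lemma tau_threshold_nonneg : 0 ≤ (√2 - 1) / √2 := by
  have : 1 ≤ √2 := Real.one_le_sqrt.2 one_le_two
  positivity

lemma tau_sub_sq_le (s t : ℝ) : (tau s - tau t) ^ 2 ≤ 2 * (s - t) ^ 2 := by
  rw [tau_eq_mul_softThreshold, tau_eq_mul_softThreshold, ← mul_sub, mul_pow,
    Real.sq_sqrt zero_le_two]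
  exact mul_le_mul_of_nonneg_left
    (sq_le_sq.2 (abs_softThreshold_sub_le tau_threshold_nonneg s t)) zero_le_two

lemma tau_sub_tau_of_lt {s t : ℝ} (hs : (√2 - 1) / √2 < s) (ht : (√2 - 1) / √2 < t) :
    tau s - tau t = √2 * (s - t) := by
  have hc := tau_threshold_nonneg
  unfold tau
  rw [if_neg (by linarith), if_neg hs.not_ge, if_neg (by linarith), if_neg ht.not_ge]
  ring

lemma Memℓp.summable_sq {x : ℕ → ℝ} (h : Memℓp x 2) : Summable fun i => x i ^ 2 := by
  simpa using (memℓp_gen_iff (by norm_num)).1 h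

lemma InBall.summable_sub_sq {x y : ℕ → ℝ} (hx : InBall x) (hy : InBall y) :
    Summable fun i => (x i - y i) ^ 2 :=
  (hx.1.sub hy.1).summable_sq

lemma inBall_single (m : ℕ) {a : ℝ} (ha : a ^ 2 ≤ 1) : InBall (Pi.single m a) := by
  have hmem := (lp.single (E := fun _ : ℕ => ℝ) 2 m a).prop
  rw [lp.coeFn_single] at hmem
  refine ⟨hmem, ?_⟩
  have h : (fun i => (Pi.single m a : ℕ → ℝ) i ^ 2) = Pi.single m (a ^ 2) :=
    funext (Pi.apply_single (fun (_ : ℕ) (t : ℝ) => t ^ 2) (fun _ => by simp) m a)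
  rwa [h, tsum_pi_single]

lemma tsum_single_sub_single_sq (m : ℕ) (a b : ℝ) :
    ∑' i, ((Pi.single m a : ℕ → ℝ) i - (Pi.single m b : ℕ → ℝ) i) ^ 2 = (a - b) ^ 2 := by
  have h : (fun i => ((Pi.single m a : ℕ → ℝ) i - (Pi.single m b : ℕ → ℝ) i) ^ 2) =
      Pi.single m ((a - b) ^ 2) :=
    funext (Pi.apply_single₂ (fun (_ : ℕ) (s t : ℝ) => (s - t) ^ 2) (fun _ => by simp) m a b)
  rw [h, tsum_pi_single]

lemma tsum_le_mul_tsum_of_le_mul_shift {u d : ℕ → ℝ} {K : ℝ} (j : ℕ) (hd : Summable d)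
    (hd0 : ∀ i, 0 ≤ d i) (hu0 : ∀ i, 0 ≤ u i) (hK : 0 ≤ K) (h : ∀ i, u i ≤ K * d (i + j)) :
    ∑' i, u i ≤ K * ∑' i, d i := by
  have hdj : Summable fun i => d (i + j) := hd.comp_injective (add_left_injective j)
  calc ∑' i, u i ≤ ∑' i, K * d (i + j) :=
        (hdj.mul_left K).of_nonneg_of_le hu0 h |>.tsum_le_tsum h (hdj.mul_left K)
    _ = K * ∑' i, d (i + j) := tsum_mul_left
    _ ≤ K * ∑' i, d i := mul_le_mul_of_nonneg_left
        (hdj.tsum_le_tsum_of_inj _ (add_left_injective j) (fun c _ => hd0 c) (fun _ => le_rfl) hd)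
        hK

lemma Tseq_iterate_apply_add_two (j : ℕ) (x : ℕ → ℝ) (n : ℕ) :
    Tseq^[j] x (n + 2) = x (n + 2 + j) := by
  induction j generalizing n with
  | zero => rfl
  | succ j ih =>
    rw [Function.iterate_succ_apply']
    exact (ih (n + 1)).trans (congrArg x (by omega))

lemma Tseq_iterate_add_two_apply_zero (j : ℕ) (x : ℕ → ℝ) :
    Tseq^[j + 2] x 0 = tau (√(2 / 3) * x (j + 2)) := by
  rw [add_comm, Function.iterate_add_apply]
  exact congrArg (fun t => tau (√(2 / 3) * t)) ((Tseq_iterate_apply_add_two j x 0).trans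
    (congrArg x (by omega)))

lemma Tseq_iterate_add_two_apply_one (j : ℕ) (x : ℕ → ℝ) :
    Tseq^[j + 2] x 1 = √(2 / 3) * x (j + 3) := by
  rw [add_comm, Function.iterate_add_apply]
  exact congrArg (√(2 / 3) * ·) ((Tseq_iterate_apply_add_two j x 1).trans
    (congrArg x (by omega)))

lemma Tseq_sub_sq_le (x y : ℕ → ℝ) (i : ℕ) :
    (Tseq x i - Tseq y i) ^ 2 ≤ 2 * (x (i + 1) - y (i + 1)) ^ 2 :=
  match i with
  | 0 => tau_sub_sq_le (x 1) (y 1)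
  | 1 => by
    show (√(2 / 3) * x 2 - √(2 / 3) * y 2) ^ 2 ≤ 2 * (x 2 - y 2) ^ 2
    rw [← mul_sub, mul_pow, Real.sq_sqrt (by norm_num)]
    exact mul_le_mul_of_nonneg_right (by norm_num) (sq_nonneg _)
  | n + 2 => le_mul_of_one_le_left (sq_nonneg _) one_le_two

lemma Tseq_iterate_add_two_sub_sq_le (j : ℕ) (x y : ℕ → ℝ) (i : ℕ) :
    (Tseq^[j + 2] x i - Tseq^[j + 2] y i) ^ 2 ≤ 4 / 3 * (x (i + (j + 2)) - y (i + (j + 2))) ^ 2 :=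
  match i with
  | 0 => by
    rw [Tseq_iterate_add_two_apply_zero, Tseq_iterate_add_two_apply_zero, zero_add]
    calc _ ≤ 2 * (√(2 / 3) * x (j + 2) - √(2 / 3) * y (j + 2)) ^ 2 := tau_sub_sq_le _ _
      _ = 4 / 3 * (x (j + 2) - y (j + 2)) ^ 2 := by
        rw [← mul_sub, mul_pow, Real.sq_sqrt (by norm_num)]; ring
  | 1 => by
    rw [Tseq_iterate_add_two_apply_one, Tseq_iterate_add_two_apply_one, ← mul_sub, mul_pow,
      Real.sq_sqrt (by norm_num), show 1 + (j + 2) = j + 3 by omega]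
    exact mul_le_mul_of_nonneg_right (by norm_num) (sq_nonneg _)
  | n + 2 => by
    rw [Tseq_iterate_apply_add_two, Tseq_iterate_apply_add_two]
    exact le_mul_of_one_le_left (sq_nonneg _) (by norm_num)

lemma tsum_Tseq_sub_sq_le {x y : ℕ → ℝ} (h : Summable fun i => (x i - y i) ^ 2) :
    ∑' i, (Tseq x i - Tseq y i) ^ 2 ≤ 2 * ∑' i, (x i - y i) ^ 2 :=
  tsum_le_mul_tsum_of_le_mul_shift 1 h (fun _ => sq_nonneg _) (fun _ => sq_nonneg _) zero_le_two
    (Tseq_sub_sq_le x y)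

lemma tsum_Tseq_iterate_add_two_sub_sq_le (j : ℕ) {x y : ℕ → ℝ}
    (h : Summable fun i => (x i - y i) ^ 2) :
    ∑' i, (Tseq^[j + 2] x i - Tseq^[j + 2] y i) ^ 2 ≤ 4 / 3 * ∑' i, (x i - y i) ^ 2 :=
  tsum_le_mul_tsum_of_le_mul_shift (j + 2) h (fun _ => sq_nonneg _) (fun _ => sq_nonneg _)
    (by norm_num) (Tseq_iterate_add_two_sub_sq_le j x y)

lemma Tseq_single_one (a : ℝ) : Tseq (Pi.single 1 a) = Pi.single 0 (tau a) := by
  funext i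
  match i with
  | 0 => rfl
  | 1 => simp [Tseq]
  | n + 2 => simp [Tseq]

lemma Tseq_iterate_add_two_single (j : ℕ) (a : ℝ) :
    Tseq^[j + 2] (Pi.single (j + 2) a) = Pi.single 0 (tau (√(2 / 3) * a)) := by
  funext i
  match i with
  | 0 => simp [Tseq_iterate_add_two_apply_zero]
  | 1 => simp [Tseq_iterate_add_two_apply_one]
  | n + 2 => simp [Tseq_iterate_apply_add_two]

lemma tau_threshold_lt_two_fifths : (√2 - 1) / √2 < 2 / 5 := by
  have h2 : √2 ^ 2 = 2 := Real.sq_sqrt zero_le_two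
  rw [div_lt_iff₀ (by positivity)]
  nlinarith [Real.sqrt_nonneg 2]

lemma two_fifths_lt_sqrt_two_thirds_div_two : 2 / 5 < √(2 / 3) / 2 := by
  rw [lt_div_iff₀ two_pos, Real.lt_sqrt (by norm_num)]
  norm_num

lemma two_div_sqrt_three_sq : (2 / √3) ^ 2 = 4 / 3 := by
  rw [div_pow, Real.sq_sqrt (by norm_num)]
  norm_num

lemma tsum_Tseq_single_sub_sq :
    ∑' i, (Tseq (Pi.single 1 1) i - Tseq (Pi.single 1 (1 / 2)) i) ^ 2 =
      √2 ^ 2 * ∑' i, ((Pi.single 1 1 : ℕ → ℝ) i - (Pi.single 1 (1 / 2) : ℕ → ℝ) i) ^ 2 := by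
  have hc := tau_threshold_lt_two_fifths
  rw [Tseq_single_one, Tseq_single_one, tsum_single_sub_single_sq, tsum_single_sub_single_sq,
    tau_sub_tau_of_lt (by linarith) (by linarith), mul_pow]

lemma tsum_Tseq_iterate_add_two_single_sub_sq (j : ℕ) :
    ∑' i, (Tseq^[j + 2] (Pi.single (j + 2) 1) i -
        Tseq^[j + 2] (Pi.single (j + 2) (1 / 2)) i) ^ 2 =
      (2 / √3) ^ 2 * ∑' i, ((Pi.single (j + 2) 1 : ℕ → ℝ) i -
        (Pi.single (j + 2) (1 / 2) : ℕ → ℝ) i) ^ 2 := by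
  have hc := tau_threshold_lt_two_fifths.trans two_fifths_lt_sqrt_two_thirds_div_two
  rw [Tseq_iterate_add_two_single, Tseq_iterate_add_two_single, tsum_single_sub_single_sq,
    tsum_single_sub_single_sq, tau_sub_tau_of_lt (by linarith [Real.sqrt_nonneg (2 / 3)])
    (by linarith), ← mul_sub, mul_pow, mul_pow, Real.sq_sqrt zero_le_two,
    Real.sq_sqrt (by norm_num), two_div_sqrt_three_sq]
  ring

lemma tsum_sub_sq_lt_of_eq_mul {S : (ℕ → ℝ) → ℕ → ℝ} {L : ℝ} {x y : ℕ → ℝ}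
    (hxy : 0 < ∑' i, (x i - y i) ^ 2)
    (heq : ∑' i, (S x i - S y i) ^ 2 = L ^ 2 * ∑' i, (x i - y i) ^ 2) (hL : 1 < L ^ 2) :
    ∑' i, (x i - y i) ^ 2 < ∑' i, (S x i - S y i) ^ 2 :=
  heq ▸ lt_mul_of_one_lt_left hxy hL

lemma le_of_tsum_sub_sq_eq_mul {S : (ℕ → ℝ) → ℕ → ℝ} {L : ℝ} {x y : ℕ → ℝ}
    (hx : InBall x) (hy : InBall y) (hxy : 0 < ∑' i, (x i - y i) ^ 2)
    (heq : ∑' i, (S x i - S y i) ^ 2 = L ^ 2 * ∑' i, (x i - y i) ^ 2) {k : ℝ} (hk : 0 ≤ k)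
    (hS : ∀ x y : ℕ → ℝ, InBall x → InBall y →
      ∑' i, (S x i - S y i) ^ 2 ≤ k ^ 2 * ∑' i, (x i - y i) ^ 2) : L ≤ k :=
  (le_abs_self L).trans
    (abs_le_of_sq_le_sq (le_of_mul_le_mul_right (heq ▸ hS x y hx hy) hxy) hk)

/-- No iterate of `T` is nonexpansive on the closed unit ball `B` of `ℓ²`: for every
`j ≥ 1` there are `x, y ∈ B` with `‖Tʲx - Tʲy‖₂ > ‖x - y‖₂` (norms are compared via
`‖z‖₂² = ∑' i, (z i)²`).  Indeed, the Lipschitz constant of `T` on `B` is exactly `√2`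
and that of `Tʲ` is exactly `2/√3` for every `j ≥ 2` (a constant `k ≥ 0` is a Lipschitz
bound iff `∑' i, (Sx i - Sy i)² ≤ k² · ∑' i, (x i - y i)²` for all `x, y ∈ B`). -/
theorem Tseq_iterates_not_nonexpansive :
    (∀ j : ℕ, 1 ≤ j → ∃ x y : ℕ → ℝ, InBall x ∧ InBall y ∧
      (∑' i, (x i - y i) ^ 2) < ∑' i, (Tseq^[j] x i - Tseq^[j] y i) ^ 2) ∧
    (∀ x y : ℕ → ℝ, InBall x → InBall y →
      (∑' i, (Tseq x i - Tseq y i) ^ 2) ≤ Real.sqrt 2 ^ 2 * ∑' i, (x i - y i) ^ 2) ∧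
    (∀ k : ℝ, 0 ≤ k →
      (∀ x y : ℕ → ℝ, InBall x → InBall y →
        (∑' i, (Tseq x i - Tseq y i) ^ 2) ≤ k ^ 2 * ∑' i, (x i - y i) ^ 2) →
      Real.sqrt 2 ≤ k) ∧
    (∀ j : ℕ, 2 ≤ j →
      (∀ x y : ℕ → ℝ, InBall x → InBall y →
        (∑' i, (Tseq^[j] x i - Tseq^[j] y i) ^ 2) ≤
          (2 / Real.sqrt 3) ^ 2 * ∑' i, (x i - y i) ^ 2) ∧
      (∀ k : ℝ, 0 ≤ k →
        (∀ x y : ℕ → ℝ, InBall x → InBall y →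
          (∑' i, (Tseq^[j] x i - Tseq^[j] y i) ^ 2) ≤ k ^ 2 * ∑' i, (x i - y i) ^ 2) →
        2 / Real.sqrt 3 ≤ k)) := by
  have hone (m : ℕ) : InBall (Pi.single m 1) := inBall_single m (by norm_num)
  have hhalf (m : ℕ) : InBall (Pi.single m (1 / 2)) := inBall_single m (by norm_num)
  have hpos (m : ℕ) :
      0 < ∑' i, ((Pi.single m 1 : ℕ → ℝ) i - (Pi.single m (1 / 2) : ℕ → ℝ) i) ^ 2 := by
    rw [tsum_single_sub_single_sq]; norm_num
  have hsqrt2 : √2 ^ 2 = 2 := Real.sq_sqrt zero_le_two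
  refine ⟨fun j hj => ?_, fun x y hx hy => ?_, fun k hk hT => ?_, fun j hj => ?_⟩
  · rcases hj.eq_or_lt with rfl | hj
    · refine ⟨_, _, hone 1, hhalf 1, ?_⟩
      exact tsum_sub_sq_lt_of_eq_mul (hpos 1) tsum_Tseq_single_sub_sq (by norm_num [hsqrt2])
    · obtain ⟨j, rfl⟩ := Nat.exists_eq_add_of_le' (hj : 2 ≤ j)
      refine ⟨_, _, hone (j + 2), hhalf (j + 2), ?_⟩
      exact tsum_sub_sq_lt_of_eq_mul (hpos _) (tsum_Tseq_iterate_add_two_single_sub_sq j)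
        (by norm_num [two_div_sqrt_three_sq])
  · rw [hsqrt2]
    exact tsum_Tseq_sub_sq_le (hx.summable_sub_sq hy)
  · exact le_of_tsum_sub_sq_eq_mul (hone 1) (hhalf 1) (hpos 1) tsum_Tseq_single_sub_sq hk hT
  · obtain ⟨j, rfl⟩ := Nat.exists_eq_add_of_le' hj
    refine ⟨fun x y hx hy => ?_, fun k hk hT => ?_⟩
    · rw [two_div_sqrt_three_sq]
      exact tsum_Tseq_iterate_add_two_sub_sq_le j (hx.summable_sub_sq hy)
    · exact le_of_tsum_sub_sq_eq_mul (hone _) (hhalf _) (hpos _)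
        (tsum_Tseq_iterate_add_two_single_sub_sq j) hk hT
end
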